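/- arXiv:2001.08800 — 12 statements merged into one kernel-verified Lean document; each statement's English description precedes it below -/
import Mathlib

section
/- Let X be a completely regular Hausdorff topological space. Then X is compact if and only if the inclusion C*(X) ⊆ B(X) satisfies Condition (C): for all bounded subsets S, T of C*(X) and every real ε > 0, if the pointwise infimum of S plus the constant ε is pointwise less than or equal to the pointwise supremum of T, then there exist finite subsets S₀ ⊆ S and T₀ ⊆ T such that the pointwise minimum of S₀ is less than or equal to the pointwise maximum of T₀. -/
/-!
If `X` is compact, pick for each point `x` functions `f ∈ S`, `g ∈ T` with `f x < g x`; the open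
sets `{f < g}` cover `X`, and a finite subcover yields `S₀` and `T₀`. Conversely, given an open
cover `U`, let `T` consist of the continuous functions `X → [0, 1]` supported in some `U i`.
Complete regularity provides, at every point, a function of `T` equal to `1` there, so Condition
(C) applies to `S = {1/2}`, `T` and `ε = 1/2`; the finite `T₀` it produces is positive at every
point, and the members of the cover containing the supports of `T₀` form a finite subcover.
-/

open Set Function unitInterval

theorem exists_lt_of_csInf_lt_csSup {α : Type*} [ConditionallyCompleteLinearOrder α]
    {A B : Set α} (hA : A.Nonempty) (hB : B.Nonempty) (h : sInf A < sSup B) :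
    ∃ a ∈ A, ∃ b ∈ B, a < b := by
  obtain ⟨b, hb, hlt⟩ := exists_lt_of_lt_csSup hB h
  obtain ⟨a, ha, hab⟩ := exists_lt_of_csInf_lt hA hlt
  exact ⟨a, ha, b, hb, hab⟩

section

variable {X : Type*} [TopologicalSpace X]

theorem exists_finite_forall_exists_lt_of_compactSpace [CompactSpace X] {α : Type*}
    [LinearOrder α] [TopologicalSpace α] [OrderClosedTopology α] {S T : Set (X → α)}
    (hS : ∀ f ∈ S, Continuous f) (hT : ∀ g ∈ T, Continuous g)
    (h : ∀ x, ∃ f ∈ S, ∃ g ∈ T, f x < g x) :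
    ∃ S₀ ⊆ S, ∃ T₀ ⊆ T, S₀.Finite ∧ T₀.Finite ∧ ∀ x, ∃ f ∈ S₀, ∃ g ∈ T₀, f x < g x := by
  obtain ⟨P, hP, hPfin, hcov⟩ := isCompact_univ.elim_finite_subcover_image
    (b := S ×ˢ T) (c := fun p => {x | p.1 x < p.2 x})
    (fun p hp => isOpen_lt (hS _ hp.1) (hT _ hp.2)) fun x _ => by
      obtain ⟨f, hf, g, hg, hfg⟩ := h x
      exact mem_biUnion (mk_mem_prod hf hg) hfg
  refine ⟨Prod.fst '' P, image_subset_iff.2 fun p hp => (hP hp).1,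
    Prod.snd '' P, image_subset_iff.2 fun p hp => (hP hp).2,
    hPfin.image _, hPfin.image _, fun x => ?_⟩
  obtain ⟨p, hp, hx⟩ := mem_iUnion₂.1 (hcov (mem_univ x))
  exact ⟨p.1, mem_image_of_mem _ hp, p.2, mem_image_of_mem _ hp, hx⟩

theorem exists_finite_sInf_le_sSup_of_compactSpace [CompactSpace X] {S T : Set (X → ℝ)}
    (hSne : S.Nonempty) (hTne : T.Nonempty)
    (hS : ∀ f ∈ S, Continuous f) (hT : ∀ g ∈ T, Continuous g)
    (hlt : ∀ x, sInf ((· x) '' S) < sSup ((· x) '' T)) :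
    ∃ S₀ T₀ : Set (X → ℝ), S₀ ⊆ S ∧ T₀ ⊆ T ∧ S₀.Finite ∧ T₀.Finite ∧
      S₀.Nonempty ∧ T₀.Nonempty ∧ ∀ x, sInf ((· x) '' S₀) ≤ sSup ((· x) '' T₀) := by
  obtain ⟨S₀, hS₀, T₀, hT₀, hS₀fin, hT₀fin, hS₀T₀⟩ :=
    exists_finite_forall_exists_lt_of_compactSpace hS hT fun x => by
      obtain ⟨_, ⟨f, hf, rfl⟩, _, ⟨g, hg, rfl⟩, hfg⟩ :=
        exists_lt_of_csInf_lt_csSup (hSne.image _) (hTne.image _) (hlt x)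
      exact ⟨f, hf, g, hg, hfg⟩
  -- `S₀` and `T₀` are empty when `X` is; inserting fixed members keeps them nonempty.
  obtain ⟨f₀, hf₀⟩ := hSne
  obtain ⟨g₀, hg₀⟩ := hTne
  refine ⟨insert f₀ S₀, insert g₀ T₀, insert_subset hf₀ hS₀, insert_subset hg₀ hT₀,
    hS₀fin.insert _, hT₀fin.insert _, insert_nonempty _ _, insert_nonempty _ _, fun x => ?_⟩
  obtain ⟨f, hf, g, hg, hfg⟩ := hS₀T₀ x
  calc sInf ((· x) '' insert f₀ S₀) ≤ f x :=
        csInf_le ((hS₀fin.insert _).image _).bddBelow (mem_image_of_mem _ (mem_insert_of_mem _ hf))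
    _ ≤ g x := hfg.le
    _ ≤ sSup ((· x) '' insert g₀ T₀) :=
        le_csSup ((hT₀fin.insert _).image _).bddAbove (mem_image_of_mem _ (mem_insert_of_mem _ hg))

theorem CompletelyRegularSpace.exists_continuous_eq_one_support_subset [CompletelyRegularSpace X]
    {U : Set X} {x : X} (hU : IsOpen U) (hx : x ∈ U) :
    ∃ g : X → ℝ, Continuous g ∧ (∀ y, g y ∈ Icc 0 1) ∧ g x = 1 ∧ support g ⊆ U := by
  obtain ⟨f, hfc, hfx, hfU⟩ := CompletelyRegularSpace.completely_regular_isOpen x U hU hx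
  refine ⟨fun y => σ (f y), continuous_subtype_val.comp (continuous_symm.comp hfc),
    fun y => (σ (f y)).2, by simp [hfx], fun y hy => ?_⟩
  by_contra hyU
  exact hy (by simp [hfU hyU])

theorem CompletelyRegularSpace.compactSpace_of_condition [CompletelyRegularSpace X]
    (h : ∀ (S T : Set (X → ℝ)) (ε : ℝ), 0 < ε →
        S.Nonempty → T.Nonempty →
        (∀ f ∈ S, Continuous f) → (∀ g ∈ T, Continuous g) →
        (∃ M : ℝ, ∀ f ∈ S, ∀ x, |f x| ≤ M) →
        (∃ M : ℝ, ∀ g ∈ T, ∀ x, |g x| ≤ M) →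
        (∀ x, sInf ((· x) '' S) + ε ≤ sSup ((· x) '' T)) →
        ∃ S₀ T₀ : Set (X → ℝ), S₀ ⊆ S ∧ T₀ ⊆ T ∧ S₀.Finite ∧ T₀.Finite ∧
          S₀.Nonempty ∧ T₀.Nonempty ∧ ∀ x, sInf ((· x) '' S₀) ≤ sSup ((· x) '' T₀)) :
    CompactSpace X := by
  rcases isEmpty_or_nonempty X with hX | ⟨⟨x₀⟩⟩
  · infer_instance
  refine ⟨isCompact_of_finite_subcover fun {ι} U hU hcov => ?_⟩
  set T : Set (X → ℝ) := {g | Continuous g ∧ (∀ y, g y ∈ Icc 0 1) ∧ ∃ i, support g ⊆ U i}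
  have hbump : ∀ x, ∃ g ∈ T, g x = 1 := fun x => by
    obtain ⟨i, hi⟩ := mem_iUnion.1 (hcov (mem_univ x))
    obtain ⟨g, hgc, hg01, hgx, hgU⟩ := exists_continuous_eq_one_support_subset (hU i) hi
    exact ⟨g, ⟨hgc, hg01, i, hgU⟩, hgx⟩
  have hsSup : ∀ x, 1 ≤ sSup ((· x) '' T) := fun x => by
    obtain ⟨g, hg, hgx⟩ := hbump x
    exact hgx ▸ le_csSup ⟨1, forall_mem_image.2 fun g hg => (hg.2.1 x).2⟩ (mem_image_of_mem _ hg)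
  obtain ⟨S₀, T₀, hS₀, hT₀, -, hT₀fin, hS₀ne, hT₀ne, hS₀T₀⟩ :=
    h {fun _ => 1 / 2} T (1 / 2) one_half_pos (singleton_nonempty _)
      ((hbump x₀).imp fun _ => And.left) (by simp [continuous_const]) (fun g hg => hg.1)
      ⟨1 / 2, by norm_num⟩
      ⟨1, fun g hg x => abs_le.2 ⟨by linarith [(hg.2.1 x).1], (hg.2.1 x).2⟩⟩
      fun x => by simpa only [image_singleton, csInf_singleton, add_halves] using hsSup x
  rw [(hS₀ne.subset_singleton_iff).1 hS₀] at hS₀T₀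
  have hpos : ∀ x, ∃ g ∈ T₀, 0 < g x := fun x => by
    obtain ⟨_, ⟨g, hg, rfl⟩, hgx⟩ := exists_lt_of_lt_csSup (hT₀ne.image (· x))
      (one_half_pos.trans_le (by simpa using hS₀T₀ x))
    exact ⟨g, hg, hgx⟩
  have := hT₀fin.to_subtype
  choose j hj using fun g : T₀ => (hT₀ g.2).2.2
  refine ⟨(finite_range j).toFinset, fun x _ => ?_⟩
  obtain ⟨g, hg, hgx⟩ := hpos x
  exact mem_iUnion₂.2 ⟨j ⟨g, hg⟩, by simp, hj _ hgx.ne'⟩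

end

theorem stmt_0_general (X : Type*) [TopologicalSpace X] [CompletelyRegularSpace X] :
    CompactSpace X ↔
      ∀ (S T : Set (X → ℝ)) (ε : ℝ), 0 < ε →
        S.Nonempty → T.Nonempty →
        (∀ f ∈ S, Continuous f) → (∀ g ∈ T, Continuous g) →
        (∃ M : ℝ, ∀ f ∈ S, ∀ x, |f x| ≤ M) →
        (∃ M : ℝ, ∀ g ∈ T, ∀ x, |g x| ≤ M) →
        (∀ x, sInf ((fun f => f x) '' S) + ε ≤ sSup ((fun g => g x) '' T)) →
        ∃ S₀ T₀ : Set (X → ℝ), S₀ ⊆ S ∧ T₀ ⊆ T ∧ S₀.Finite ∧ T₀.Finite ∧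
          S₀.Nonempty ∧ T₀.Nonempty ∧
          ∀ x, sInf ((fun f => f x) '' S₀) ≤ sSup ((fun g => g x) '' T₀) := by
  refine ⟨fun _ S T ε hε hSne hTne hS hT _ _ hle => ?_,
    CompletelyRegularSpace.compactSpace_of_condition⟩
  exact exists_finite_sInf_le_sSup_of_compactSpace hSne hTne hS hT fun x =>
    (lt_add_of_pos_right _ hε).trans_le (hle x)

/-- A completely regular Hausdorff space `X` is compact iff the inclusion
`C*(X) ⊆ B(X)` satisfies Condition (C). -/
theorem stmt_0 (X : Type*) [TopologicalSpace X] [CompletelyRegularSpace X] [T2Space X] :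
    CompactSpace X ↔
      ∀ (S T : Set (X → ℝ)) (ε : ℝ), 0 < ε →
        S.Nonempty → T.Nonempty →
        (∀ f ∈ S, Continuous f) → (∀ g ∈ T, Continuous g) →
        (∃ M : ℝ, ∀ f ∈ S, ∀ x, |f x| ≤ M) →
        (∃ M : ℝ, ∀ g ∈ T, ∀ x, |g x| ≤ M) →
        (∀ x, sInf ((fun f => f x) '' S) + ε ≤ sSup ((fun g => g x) '' T)) →
        ∃ S₀ T₀ : Set (X → ℝ), S₀ ⊆ S ∧ T₀ ⊆ T ∧ S₀.Finite ∧ T₀.Finite ∧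
          S₀.Nonempty ∧ T₀.Nonempty ∧
          ∀ x, sInf ((fun f => f x) '' S₀) ≤ sSup ((fun g => g x) '' T₀) :=
  stmt_0_general X
end

section
/- Let X be a compact Hausdorff space, let f be a bounded upper semicontinuous real-valued function on X, let g be a bounded lower semicontinuous real-valued function on X, and let ε > 0 be real. If f(x) + ε ≤ g(x) for all x ∈ X, then there exists a continuous function a : X → ℝ with f(x) ≤ a(x) ≤ g(x) for all x ∈ X. -/
/-- A constant `c` with `f x < c < g x` still lies strictly between `f` and `g` near `x`, by
semicontinuity; a partition of unity glues these local constants, and since each `Ioo (f y) (g y)`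
is convex the glued function stays strictly between `f` and `g`. -/
theorem exists_continuous_strictly_between_of_upperSemicontinuous_of_lowerSemicontinuous
    {X : Type*} [TopologicalSpace X] [NormalSpace X] [ParacompactSpace X] {f g : X → ℝ}
    (hf : UpperSemicontinuous f) (hg : LowerSemicontinuous g) (hfg : ∀ x, f x < g x) :
    ∃ a : C(X, ℝ), ∀ x, f x < a x ∧ a x < g x :=
  exists_continuous_forall_mem_convex_of_local_const (fun x => convex_Ioo (f x) (g x)) fun x =>
    let ⟨c, hfc, hcg⟩ := exists_between (hfg x)
    ⟨c, (hf x c hfc).and (hg x c hcg)⟩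

theorem stmt_1_general {X : Type*} [TopologicalSpace X] [CompactSpace X] [T2Space X]
    (f g : X → ℝ) (ε : ℝ) (hε : 0 < ε)
    (hf : ∀ l : ℝ, IsOpen (f ⁻¹' Set.Iio l)) (hg : ∀ l : ℝ, IsOpen (g ⁻¹' Set.Ioi l))
    (hfg : ∀ x, f x + ε ≤ g x) :
    ∃ a : X → ℝ, Continuous a ∧ ∀ x, f x ≤ a x ∧ a x ≤ g x := by
  obtain ⟨a, ha⟩ :=
    exists_continuous_strictly_between_of_upperSemicontinuous_of_lowerSemicontinuous
      (upperSemicontinuous_iff_isOpen_preimage.2 hf) (lowerSemicontinuous_iff_isOpen_preimage.2 hg)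
      fun x => (lt_add_of_pos_right (f x) hε).trans_le (hfg x)
  exact ⟨a, a.continuous, fun x => ⟨(ha x).1.le, (ha x).2.le⟩⟩

/-- On a compact Hausdorff space, if `f` is bounded usc, `g` is bounded lsc,
and `f + ε ≤ g`, then there is a continuous `a` with `f ≤ a ≤ g`. -/
theorem stmt_1 {X : Type*} [TopologicalSpace X] [CompactSpace X] [T2Space X]
    (f g : X → ℝ) (ε : ℝ) (hε : 0 < ε)
    (hfb : ∃ M : ℝ, ∀ x, |f x| ≤ M) (hgb : ∃ M : ℝ, ∀ x, |g x| ≤ M)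
    (hf : ∀ l : ℝ, IsOpen (f ⁻¹' Set.Iio l)) (hg : ∀ l : ℝ, IsOpen (g ⁻¹' Set.Ioi l))
    (hfg : ∀ x, f x + ε ≤ g x) :
    ∃ a : X → ℝ, Continuous a ∧ ∀ x, f x ≤ a x ∧ a x ≤ g x :=
  stmt_1_general f g ε hε hf hg hfg
end

section
/- (Katětov–Tong theorem, compact case) Let X be a compact Hausdorff space. If f is a bounded upper semicontinuous real-valued function on X and g is a bounded lower semicontinuous real-valued function on X with f(x) ≤ g(x) for all x ∈ X, then there exists a continuous function a : X → ℝ with f(x) ≤ a(x) ≤ g(x) for all x ∈ X. -/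
/-!
Insert a bounded continuous function between `f` and `g` up to an error that shrinks
geometrically. If `f ≤ a + c` and `a - c ≤ g`, Urysohn's lemma separates the closed sets
`{f - a ≥ c/3}` and `{g - a ≤ -c/3}` (disjoint because `f ≤ g`), and shifting `a` by `±c/3`
accordingly improves the error to `2c/3`. The corrections are summable, so the approximants
converge uniformly to a continuous function squeezed between `f` and `g`.
-/

open Set Filter Topology BoundedContinuousFunction

namespace KatetovTong

variable {X : Type*} [TopologicalSpace X] {f g : X → ℝ}

theorem exists_refine [NormalSpace X] (hf : UpperSemicontinuous f)
    (hg : LowerSemicontinuous g) (hfg : ∀ x, f x ≤ g x) {c : ℝ} (hc : 0 < c) (a : X →ᵇ ℝ)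
    (ha : ∀ x, f x ≤ a x + c ∧ a x - c ≤ g x) :
    ∃ b : X →ᵇ ℝ, dist a b ≤ c / 3 ∧ ∀ x, f x ≤ b x + 2 / 3 * c ∧ b x - 2 / 3 * c ≤ g x := by
  have hfa : UpperSemicontinuous fun x => f x - a x :=
    hf.add a.continuous.neg.upperSemicontinuous
  have hga : LowerSemicontinuous fun x => g x - a x :=
    hg.add a.continuous.neg.lowerSemicontinuous
  have hdisj : Disjoint ((fun x => f x - a x) ⁻¹' Ici (c / 3))
      ((fun x => g x - a x) ⁻¹' Iic (-(c / 3))) := by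
    refine disjoint_left.2 fun x hxA hxB => ?_
    simp only [mem_preimage, mem_Ici, mem_Iic] at hxA hxB
    linarith [hfg x]
  obtain ⟨u, huA, huB, hu01⟩ :=
    exists_bounded_zero_one_of_closed (hfa.isClosed_preimage _) (hga.isClosed_preimage _) hdisj
  -- equal to `a + c / 3` where `u = 0` and to `a - c / 3` where `u = 1`
  refine ⟨a + const X (c / 3) - (2 / 3 * c) • u, ?_, fun x => ?_⟩
  · refine (dist_le (by positivity)).2 fun x => ?_
    simp only [coe_sub, coe_add, coe_smul, const_apply, Pi.add_apply, Pi.sub_apply, smul_eq_mul,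
      Real.dist_eq, abs_le]
    obtain ⟨hu0, hu1⟩ := hu01 x
    constructor <;> nlinarith
  · simp only [coe_sub, coe_add, coe_smul, const_apply, Pi.add_apply, Pi.sub_apply, smul_eq_mul]
    obtain ⟨hu0, hu1⟩ := hu01 x
    constructor
    · by_cases hxA : c / 3 ≤ f x - a x
      · simp only [huA hxA, Pi.zero_apply]
        linarith [ha x]
      · nlinarith
    · by_cases hxB : g x - a x ≤ -(c / 3)
      · simp only [huB hxB, Pi.one_apply]
        linarith [ha x]
      · nlinarith

theorem exists_seq_geometric [NormalSpace X] (hf : UpperSemicontinuous f)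
    (hg : LowerSemicontinuous g) (hfg : ∀ x, f x ≤ g x) {c : ℝ} (hc : 0 < c) (a₀ : X →ᵇ ℝ)
    (ha₀ : ∀ x, f x ≤ a₀ x + c ∧ a₀ x - c ≤ g x) :
    ∃ a : ℕ → X →ᵇ ℝ, ∀ n, dist (a n) (a (n + 1)) ≤ c / 3 * (2 / 3) ^ n ∧
      ∀ x, f x ≤ a n x + c * (2 / 3) ^ n ∧ a n x - c * (2 / 3) ^ n ≤ g x := by
  have step : ∀ (n : ℕ) (b : X →ᵇ ℝ),
      (∀ x, f x ≤ b x + c * (2 / 3) ^ n ∧ b x - c * (2 / 3) ^ n ≤ g x) →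
      ∃ b' : X →ᵇ ℝ, dist b b' ≤ c / 3 * (2 / 3) ^ n ∧
        ∀ x, f x ≤ b' x + c * (2 / 3) ^ (n + 1) ∧ b' x - c * (2 / 3) ^ (n + 1) ≤ g x := by
    intro n b hb
    obtain ⟨b', hdist, hb'⟩ := exists_refine hf hg hfg (by positivity) b hb
    refine ⟨b', by linarith, fun x => ?_⟩
    rw [show c * (2 / 3) ^ (n + 1) = 2 / 3 * (c * (2 / 3) ^ n) by ring]
    exact hb' x
  choose! next hnext using step
  let a : ℕ → X →ᵇ ℝ := fun n => Nat.rec a₀ (fun k b => next k b) n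
  have ha : ∀ n, ∀ x, f x ≤ a n x + c * (2 / 3) ^ n ∧ a n x - c * (2 / 3) ^ n ≤ g x := by
    intro n
    induction n with
    | zero => simpa only [pow_zero, mul_one, a, Nat.rec_zero] using ha₀
    | succ n ih => exact (hnext n (a n) ih).2
  exact ⟨a, fun n => ⟨(hnext n (a n) (ha n)).1, ha n⟩⟩

theorem exists_continuous_between_of_bddAbove_of_bddBelow [NormalSpace X]
    (hf : UpperSemicontinuous f) (hg : LowerSemicontinuous g) (hfg : ∀ x, f x ≤ g x)
    (hf_bdd : BddAbove (range f)) (hg_bdd : BddBelow (range g)) :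
    ∃ a : X → ℝ, Continuous a ∧ ∀ x, f x ≤ a x ∧ a x ≤ g x := by
  obtain ⟨M₁, hM₁⟩ := hf_bdd
  obtain ⟨M₂, hM₂⟩ := hg_bdd
  set c := |M₁| + |M₂| + 1
  have hc : 0 < c := by positivity
  obtain ⟨a, ha⟩ := exists_seq_geometric hf hg hfg hc 0 fun x => by
    have h₁ := hM₁ (mem_range_self x)
    have h₂ := hM₂ (mem_range_self x)
    simp only [coe_zero, Pi.zero_apply, zero_add, zero_sub]
    constructor <;> linarith [le_abs_self M₁, neg_abs_le M₂, abs_nonneg M₁, abs_nonneg M₂]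
  obtain ⟨b, hb⟩ := cauchySeq_tendsto_of_complete <|
    cauchySeq_of_le_geometric (2 / 3) (c / 3) (by norm_num) fun n => (ha n).1
  have hbx : ∀ x, Tendsto (fun n => a n x) atTop (𝓝 (b x)) := fun x =>
    ((continuous_eval_const x).tendsto b).comp hb
  have hgeom : Tendsto (fun n => c * (2 / 3 : ℝ) ^ n) atTop (𝓝 0) := by
    simpa using (tendsto_pow_atTop_nhds_zero_of_lt_one (by norm_num) (by norm_num)).const_mul c
  refine ⟨b, b.continuous, fun x => ⟨?_, ?_⟩⟩
  · exact ge_of_tendsto' (by simpa using (hbx x).add hgeom) fun n => ((ha n).2 x).1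
  · exact le_of_tendsto' (by simpa using (hbx x).sub hgeom) fun n => ((ha n).2 x).2

end KatetovTong

/-- Katětov–Tong, compact case: On a compact Hausdorff space, if `f` is
bounded usc, `g` is bounded lsc, and `f ≤ g`, then there is a continuous `a` with
`f ≤ a ≤ g`. -/
theorem stmt_2 {X : Type*} [TopologicalSpace X] [CompactSpace X] [T2Space X]
    (f g : X → ℝ)
    (hfb : ∃ M : ℝ, ∀ x, |f x| ≤ M) (hgb : ∃ M : ℝ, ∀ x, |g x| ≤ M)
    (hf : ∀ l : ℝ, IsOpen (f ⁻¹' Set.Iio l)) (hg : ∀ l : ℝ, IsOpen (g ⁻¹' Set.Ioi l))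
    (hfg : ∀ x, f x ≤ g x) :
    ∃ a : X → ℝ, Continuous a ∧ ∀ x, f x ≤ a x ∧ a x ≤ g x := by
  obtain ⟨M₁, hM₁⟩ := hfb
  obtain ⟨M₂, hM₂⟩ := hgb
  exact KatetovTong.exists_continuous_between_of_bddAbove_of_bddBelow
    (upperSemicontinuous_iff_isOpen_preimage.2 hf) (lowerSemicontinuous_iff_isOpen_preimage.2 hg)
    hfg ⟨M₁, forall_mem_range.2 fun x => (abs_le.1 (hM₁ x)).2⟩
    ⟨-M₂, forall_mem_range.2 fun x => (abs_le.1 (hM₂ x)).1⟩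
end

section
/- Let X be a dense subspace of a compact Hausdorff space Y and let f be a bounded upper semicontinuous real-valued function on X. Define U(f) : Y → ℝ by U(f)(y) = inf over open neighborhoods U of y in Y of sup_{x ∈ U ∩ X} f(x). Then U(f) is a bounded upper semicontinuous function on Y and U(f) extends f, i.e., U(f)(x) = f(x) for all x ∈ X. -/
/-!
Write `g(U) = sup_{U ∩ X} f`, so that `U(f)(y) = inf_{U ∋ y open} g(U)`. Density makes every
`U ∩ X` nonempty, hence `-M ≤ g(U) ≤ M`, and the infimum is an honest one (not the junk value of an
unbounded set). An open `U ∋ y` with `g(U) < l` witnesses `U(f) < l` on all of `U`, which is upper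
semicontinuity. On `X`, `f x ≤ g(U)` for every `U ∋ x`, and upper semicontinuity of `f` provides,
for each `ε > 0`, an open `U ∋ x` with `g(U) ≤ f x + ε`.
-/

/-- The upper extension `U(f)` of a function `f` defined on a subspace `X ⊆ Y`:
`U(f)(y) = inf over open neighborhoods U of y of sup_{x ∈ U ∩ X} f(x)`. -/
noncomputable def upperExt {Y : Type*} [TopologicalSpace Y] (X : Set Y) (f : X → ℝ)
    (y : Y) : ℝ :=
  sInf ((fun U : Set Y => sSup (f '' {x : X | (x : Y) ∈ U})) '' {U : Set Y | IsOpen U ∧ y ∈ U})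

noncomputable def localSup {Y : Type*} (X : Set Y) (f : X → ℝ) (U : Set Y) : ℝ :=
  sSup (f '' {x : X | (x : Y) ∈ U})

section UpperExt

variable {Y : Type*} {X : Set Y} {f : X → ℝ} {M : ℝ}

theorem localSup_le (hM : ∀ x, |f x| ≤ M) {U : Set Y} (hU : {x : X | (x : Y) ∈ U}.Nonempty) :
    localSup X f U ≤ M :=
  csSup_le (hU.image f) (by rintro _ ⟨x, -, rfl⟩; exact (abs_le.1 (hM x)).2)

theorem le_localSup (hM : ∀ x, |f x| ≤ M) {U : Set Y} {x : X} (hx : (x : Y) ∈ U) :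
    f x ≤ localSup X f U :=
  le_csSup ⟨M, by rintro _ ⟨x, -, rfl⟩; exact (abs_le.1 (hM x)).2⟩ ⟨x, hx, rfl⟩

variable [TopologicalSpace Y]

theorem Dense.nonempty_subtype_mem_of_isOpen (hX : Dense X) {U : Set Y} (hU : IsOpen U)
    (hne : U.Nonempty) : {x : X | (x : Y) ∈ U}.Nonempty :=
  let ⟨x, hxX, hxU⟩ := hX.exists_mem_open hU hne
  ⟨⟨x, hxX⟩, hxU⟩

theorem upperExt_eq_sInf_localSup (y : Y) :
    upperExt X f y = sInf (localSup X f '' {U : Set Y | IsOpen U ∧ y ∈ U}) :=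
  rfl

theorem nonempty_localSup_image (y : Y) :
    (localSup X f '' {U : Set Y | IsOpen U ∧ y ∈ U}).Nonempty :=
  ⟨_, Set.univ, ⟨isOpen_univ, trivial⟩, rfl⟩

theorem neg_le_localSup (hX : Dense X) (hM : ∀ x, |f x| ≤ M) {U : Set Y} (hU : IsOpen U)
    (hne : U.Nonempty) : -M ≤ localSup X f U := by
  obtain ⟨x, hx⟩ := hX.nonempty_subtype_mem_of_isOpen hU hne
  exact (abs_le.1 (hM x)).1.trans (le_localSup hM hx)

theorem bddBelow_localSup_image (hX : Dense X) (hM : ∀ x, |f x| ≤ M) (y : Y) :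
    BddBelow (localSup X f '' {U : Set Y | IsOpen U ∧ y ∈ U}) :=
  ⟨-M, by rintro _ ⟨U, ⟨hU, hyU⟩, rfl⟩; exact neg_le_localSup hX hM hU ⟨y, hyU⟩⟩

theorem upperExt_le_localSup (hX : Dense X) (hM : ∀ x, |f x| ≤ M) {U : Set Y} (hU : IsOpen U)
    {y : Y} (hy : y ∈ U) : upperExt X f y ≤ localSup X f U :=
  csInf_le (bddBelow_localSup_image hX hM y) ⟨U, ⟨hU, hy⟩, rfl⟩

theorem le_upperExt {c : ℝ} {y : Y} (h : ∀ U, IsOpen U → y ∈ U → c ≤ localSup X f U) :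
    c ≤ upperExt X f y :=
  le_csInf (nonempty_localSup_image y)
    (by rintro _ ⟨U, ⟨hU, hyU⟩, rfl⟩; exact h U hU hyU)

theorem abs_upperExt_le (hX : Dense X) (hM : ∀ x, |f x| ≤ M) (y : Y) : |upperExt X f y| ≤ M :=
  abs_le.2
    ⟨le_upperExt fun _ hU hy ↦ neg_le_localSup hX hM hU ⟨y, hy⟩,
      (upperExt_le_localSup hX hM isOpen_univ trivial).trans
        (localSup_le hM (hX.nonempty_subtype_mem_of_isOpen isOpen_univ ⟨y, trivial⟩))⟩

theorem upperExt_lt_iff (hX : Dense X) (hM : ∀ x, |f x| ≤ M) {y : Y} {l : ℝ} :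
    upperExt X f y < l ↔ ∃ U, IsOpen U ∧ y ∈ U ∧ localSup X f U < l := by
  refine ⟨fun hy ↦ ?_, fun ⟨U, hU, hyU, hUl⟩ ↦ (upperExt_le_localSup hX hM hU hyU).trans_lt hUl⟩
  rw [upperExt_eq_sInf_localSup] at hy
  obtain ⟨_, ⟨U, ⟨hU, hyU⟩, rfl⟩, hUl⟩ :=
    exists_lt_of_csInf_lt (nonempty_localSup_image y) hy
  exact ⟨U, hU, hyU, hUl⟩

theorem isOpen_upperExt_preimage_Iio (hX : Dense X) (hM : ∀ x, |f x| ≤ M) (l : ℝ) :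
    IsOpen (upperExt X f ⁻¹' Set.Iio l) := by
  refine isOpen_iff_forall_mem_open.2 fun y hy ↦ ?_
  obtain ⟨U, hU, hyU, hUl⟩ := (upperExt_lt_iff hX hM).1 hy
  exact ⟨U, fun y' hy' ↦ (upperExt_lt_iff hX hM).2 ⟨U, hU, hy', hUl⟩, hU, hyU⟩

theorem upperExt_apply_coe (hX : Dense X) (hM : ∀ x, |f x| ≤ M)
    (hf : ∀ l : ℝ, IsOpen (f ⁻¹' Set.Iio l)) (x : X) : upperExt X f x = f x := by
  refine le_antisymm (le_of_forall_pos_le_add fun ε hε ↦ ?_)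
    (le_upperExt fun _ _ hx ↦ le_localSup hM hx)
  obtain ⟨V, hV, hVf⟩ := isOpen_induced_iff.1 (hf (f x + ε))
  have hVf' : ∀ x' : X, (x' : Y) ∈ V ↔ f x' < f x + ε := fun x' ↦ Set.ext_iff.1 hVf x'
  have hxV : (x : Y) ∈ V := (hVf' x).2 (lt_add_of_pos_right _ hε)
  calc upperExt X f x ≤ localSup X f V := upperExt_le_localSup hX hM hV hxV
    _ ≤ f x + ε := csSup_le ⟨f x, x, hxV, rfl⟩ (by
        rintro _ ⟨x', hx', rfl⟩
        exact ((hVf' x').1 hx').le)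

end UpperExt

theorem stmt_3_general {Y : Type*} [TopologicalSpace Y]
    (X : Set Y) (hX : Dense X) (f : X → ℝ)
    (hfb : ∃ M : ℝ, ∀ x, |f x| ≤ M)
    (hf : ∀ l : ℝ, IsOpen (f ⁻¹' Set.Iio l)) :
    (∃ M : ℝ, ∀ y, |upperExt X f y| ≤ M) ∧
      (∀ l : ℝ, IsOpen (upperExt X f ⁻¹' Set.Iio l)) ∧
      ∀ x : X, upperExt X f x = f x := by
  obtain ⟨M, hM⟩ := hfb
  exact ⟨⟨M, abs_upperExt_le hX hM⟩, isOpen_upperExt_preimage_Iio hX hM,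
    upperExt_apply_coe hX hM hf⟩

/-- For `X` dense in a compact Hausdorff `Y` and `f` bounded usc on `X`,
`U(f)` is bounded, usc on `Y`, and extends `f`. -/
theorem stmt_3 {Y : Type*} [TopologicalSpace Y] [CompactSpace Y] [T2Space Y]
    (X : Set Y) (hX : Dense X) (f : X → ℝ)
    (hfb : ∃ M : ℝ, ∀ x, |f x| ≤ M)
    (hf : ∀ l : ℝ, IsOpen (f ⁻¹' Set.Iio l)) :
    (∃ M : ℝ, ∀ y, |upperExt X f y| ≤ M) ∧
      (∀ l : ℝ, IsOpen (upperExt X f ⁻¹' Set.Iio l)) ∧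
      ∀ x : X, upperExt X f x = f x :=
  stmt_3_general X hX f hfb hf
end

section
/- Let X be a dense subspace of a compact Hausdorff space Y and let f be a bounded lower semicontinuous real-valued function on X. Define L(f) : Y → ℝ by L(f)(y) = sup over open neighborhoods U of y in Y of inf_{x ∈ U ∩ X} f(x). Then L(f) is a bounded lower semicontinuous function on Y and L(f) extends f, i.e., L(f)(x) = f(x) for all x ∈ X. -/
/-! The lower extension of a bounded function `f` on a dense subspace `X` is bounded by the same
bound, since every open set meets `X`. It is lower semicontinuous because the neighbourhood `U`
witnessing `l < L(f)(y)` witnesses `l < L(f)(y')` for every `y' ∈ U`. On `X` it is at most `f`,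
and lower semicontinuity of `f` at `x` gives, for each `c < f x`, an open `V ∋ x` on which
`f > c`, whence `L(f)(x) ≥ c`. -/

/-- The lower extension `L(f)` of a function `f` defined on a subspace `X ⊆ Y`:
`L(f)(y) = sup over open neighborhoods U of y of inf_{x ∈ U ∩ X} f(x)`. -/
noncomputable def lowerExt {Y : Type*} [TopologicalSpace Y] (X : Set Y) (f : X → ℝ)
    (y : Y) : ℝ :=
  sSup ((fun U : Set Y => sInf (f '' {x : X | (x : Y) ∈ U})) '' {U : Set Y | IsOpen U ∧ y ∈ U})

open Set

section

variable {Y : Type*} {X : Set Y} {f : X → ℝ} {M : ℝ}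

noncomputable def infOn (f : X → ℝ) (U : Set Y) : ℝ :=
  sInf (f '' {x : X | (x : Y) ∈ U})

theorem infOn_le (hM : ∀ x, |f x| ≤ M) {U : Set Y} {x : X} (hx : (x : Y) ∈ U) :
    infOn f U ≤ f x :=
  csInf_le ⟨-M, by rintro _ ⟨z, -, rfl⟩; exact neg_le_of_abs_le (hM z)⟩ ⟨x, hx, rfl⟩

theorem le_infOn {U : Set Y} {x : X} (hx : (x : Y) ∈ U) {c : ℝ}
    (h : ∀ z : X, (z : Y) ∈ U → c ≤ f z) : c ≤ infOn f U :=
  le_csInf ⟨f x, x, hx, rfl⟩ (by rintro _ ⟨z, hz, rfl⟩; exact h z hz)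

variable [TopologicalSpace Y]

theorem abs_infOn_le (hX : Dense X) (hM : ∀ x, |f x| ≤ M) {U : Set Y} (hU : IsOpen U)
    (hne : U.Nonempty) : |infOn f U| ≤ M := by
  obtain ⟨x, hxX, hxU⟩ := hX.exists_mem_open hU hne
  have hx : ((⟨x, hxX⟩ : X) : Y) ∈ U := hxU
  exact abs_le.2 ⟨le_infOn hx fun z _ => neg_le_of_abs_le (hM z),
    (infOn_le hM hx).trans (le_of_abs_le (hM _))⟩

theorem nonempty_infOn_image (y : Y) :
    (infOn f '' {U : Set Y | IsOpen U ∧ y ∈ U}).Nonempty :=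
  ⟨_, mem_image_of_mem _ ⟨isOpen_univ, mem_univ y⟩⟩

theorem bddAbove_infOn_image (hX : Dense X) (hM : ∀ x, |f x| ≤ M) (y : Y) :
    BddAbove (infOn f '' {U : Set Y | IsOpen U ∧ y ∈ U}) :=
  ⟨M, by rintro _ ⟨U, ⟨hU, hyU⟩, rfl⟩; exact le_of_abs_le (abs_infOn_le hX hM hU ⟨y, hyU⟩)⟩

theorem infOn_le_lowerExt (hX : Dense X) (hM : ∀ x, |f x| ≤ M) {U : Set Y} (hU : IsOpen U)
    {y : Y} (hy : y ∈ U) : infOn f U ≤ lowerExt X f y :=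
  le_csSup (bddAbove_infOn_image hX hM y) ⟨U, ⟨hU, hy⟩, rfl⟩

theorem lowerExt_le_of_forall_infOn_le {y : Y} {c : ℝ}
    (h : ∀ U, IsOpen U → y ∈ U → infOn f U ≤ c) : lowerExt X f y ≤ c :=
  csSup_le (nonempty_infOn_image y) (by rintro _ ⟨U, ⟨hU, hyU⟩, rfl⟩; exact h U hU hyU)

theorem abs_lowerExt_le (hX : Dense X) (hM : ∀ x, |f x| ≤ M) (y : Y) :
    |lowerExt X f y| ≤ M :=
  abs_le.2
    ⟨(neg_le_of_abs_le (abs_infOn_le hX hM isOpen_univ ⟨y, trivial⟩)).trans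
        (infOn_le_lowerExt hX hM isOpen_univ trivial),
      lowerExt_le_of_forall_infOn_le fun _ hU hyU =>
        le_of_abs_le (abs_infOn_le hX hM hU ⟨y, hyU⟩)⟩

theorem lowerSemicontinuous_lowerExt (hX : Dense X) (hM : ∀ x, |f x| ≤ M) :
    LowerSemicontinuous (lowerExt X f) := by
  intro y c hc
  obtain ⟨_, ⟨U, ⟨hU, hyU⟩, rfl⟩, hcU⟩ := exists_lt_of_lt_csSup (nonempty_infOn_image y) hc
  filter_upwards [hU.mem_nhds hyU] with y' hy'
  exact hcU.trans_le (infOn_le_lowerExt hX hM hU hy')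

theorem lowerExt_le_self (hM : ∀ x, |f x| ≤ M) (x : X) : lowerExt X f x ≤ f x :=
  lowerExt_le_of_forall_infOn_le fun _ _ hxU => infOn_le hM hxU

theorem self_le_lowerExt (hX : Dense X) (hM : ∀ x, |f x| ≤ M) (hf : LowerSemicontinuous f)
    (x : X) : f x ≤ lowerExt X f x := by
  refine le_of_forall_lt_imp_le_of_dense fun c hc => ?_
  obtain ⟨V, hV, hVf⟩ := isOpen_induced_iff.mp (lowerSemicontinuous_iff_isOpen_preimage.mp hf c)
  have hfV : ∀ z : X, (z : Y) ∈ V ↔ c < f z := fun z => Set.ext_iff.mp hVf z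
  calc c ≤ infOn f V := le_infOn ((hfV x).2 hc) fun z hz => ((hfV z).1 hz).le
    _ ≤ lowerExt X f x := infOn_le_lowerExt hX hM hV ((hfV x).2 hc)

end

theorem stmt_4_general {Y : Type*} [TopologicalSpace Y]
    (X : Set Y) (hX : Dense X) (f : X → ℝ)
    (hfb : ∃ M : ℝ, ∀ x, |f x| ≤ M)
    (hf : ∀ l : ℝ, IsOpen (f ⁻¹' Set.Ioi l)) :
    (∃ M : ℝ, ∀ y, |lowerExt X f y| ≤ M) ∧
      (∀ l : ℝ, IsOpen (lowerExt X f ⁻¹' Set.Ioi l)) ∧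
      ∀ x : X, lowerExt X f x = f x := by
  obtain ⟨M, hM⟩ := hfb
  have hf_lsc : LowerSemicontinuous f := lowerSemicontinuous_iff_isOpen_preimage.mpr hf
  exact ⟨⟨M, abs_lowerExt_le hX hM⟩,
    lowerSemicontinuous_iff_isOpen_preimage.mp (lowerSemicontinuous_lowerExt hX hM),
    fun x => (lowerExt_le_self hM x).antisymm (self_le_lowerExt hX hM hf_lsc x)⟩

/-- For `X` dense in a compact Hausdorff `Y` and `f` bounded lsc on `X`,
`L(f)` is bounded, lsc on `Y`, and extends `f`. -/
theorem stmt_4 {Y : Type*} [TopologicalSpace Y] [CompactSpace Y] [T2Space Y]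
    (X : Set Y) (hX : Dense X) (f : X → ℝ)
    (hfb : ∃ M : ℝ, ∀ x, |f x| ≤ M)
    (hf : ∀ l : ℝ, IsOpen (f ⁻¹' Set.Ioi l)) :
    (∃ M : ℝ, ∀ y, |lowerExt X f y| ≤ M) ∧
      (∀ l : ℝ, IsOpen (lowerExt X f ⁻¹' Set.Ioi l)) ∧
      ∀ x : X, lowerExt X f x = f x :=
  stmt_4_general X hX f hfb hf
end

section
/- Let X be a normal Hausdorff space, viewed as a dense subspace of its Stone–Čech compactification βX. If f is a bounded upper semicontinuous real-valued function on X and g is a bounded lower semicontinuous real-valued function on X with f(x) ≤ g(x) for all x ∈ X, then U(f)(y) ≤ L(g)(y) for all y ∈ βX, where U(f)(y) = inf over open neighborhoods U of y in βX of sup_{x ∈ U ∩ X} f(x) and L(g)(y) = sup over open neighborhoods U of y in βX of inf_{x ∈ U ∩ X} g(x). -/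
/-!
Suppose `L(g)(y) < c' < c < U(f)(y)`. Every neighbourhood of `y` meets `X` in a point where
`f > c` and in a point where `g < c'`, so `y` lies in the closures in `βX` of the closed sets
`{c ≤ f}` and `{g ≤ c'}`, which are disjoint because `f ≤ g`. In a normal space an Urysohn function
separating them extends continuously to `βX`, so their closures in `βX` are disjoint.
-/

/-- `U(f)` on the Stone–Čech compactification:
`U(f)(y) = inf over open neighborhoods U of y in βX of sup_{x ∈ U ∩ X} f(x)`. -/
noncomputable def scUpperExt {X : Type*} [TopologicalSpace X] (f : X → ℝ)
    (y : StoneCech X) : ℝ :=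
  sInf ((fun U : Set (StoneCech X) => sSup (f '' (stoneCechUnit ⁻¹' U)))
    '' {U : Set (StoneCech X) | IsOpen U ∧ y ∈ U})

/-- `L(g)` on the Stone–Čech compactification:
`L(g)(y) = sup over open neighborhoods U of y in βX of inf_{x ∈ U ∩ X} g(x)`. -/
noncomputable def scLowerExt {X : Type*} [TopologicalSpace X] (g : X → ℝ)
    (y : StoneCech X) : ℝ :=
  sSup ((fun U : Set (StoneCech X) => sInf (g '' (stoneCechUnit ⁻¹' U)))
    '' {U : Set (StoneCech X) | IsOpen U ∧ y ∈ U})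

open Set

section StoneCech

variable {X : Type*} [TopologicalSpace X]

theorem disjoint_closure_image_stoneCechUnit [NormalSpace X] {A B : Set X}
    (hA : IsClosed A) (hB : IsClosed B) (hAB : Disjoint A B) :
    Disjoint (closure (stoneCechUnit '' A)) (closure (stoneCechUnit '' B)) := by
  obtain ⟨u, hu0, hu1, hu⟩ := exists_continuous_zero_one_of_isClosed hA hB hAB
  have hu_cont : Continuous fun x => (⟨u x, hu x⟩ : unitInterval) := by fun_prop
  set H := stoneCechExtend hu_cont
  have hH : Continuous H := continuous_stoneCechExtend hu_cont
  have closure_subset {S : Set X} {t : unitInterval} (hS : ∀ x ∈ S, u x = t) :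
      closure (stoneCechUnit '' S) ⊆ H ⁻¹' {t} := by
    refine closure_minimal ?_ (isClosed_singleton.preimage hH)
    rintro _ ⟨x, hx, rfl⟩
    simp only [mem_preimage, H, stoneCechExtend_stoneCechUnit, mem_singleton_iff]
    exact Subtype.ext (hS x hx)
  exact ((disjoint_singleton.2 zero_ne_one).preimage H).mono
    (closure_subset (t := 0) fun x hx => hu0 hx) (closure_subset (t := 1) fun x hx => hu1 hx)

variable {f : X → ℝ} {y : StoneCech X} {U : Set (StoneCech X)}

theorem scUpperExt_le_sSup (hf_above : BddAbove (range f)) (hf_below : BddBelow (range f))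
    (hU : IsOpen U) (hyU : y ∈ U) :
    scUpperExt f y ≤ sSup (f '' (stoneCechUnit ⁻¹' U)) := by
  refine csInf_le ?_ ⟨U, ⟨hU, hyU⟩, rfl⟩
  obtain ⟨m, hm⟩ := hf_below
  refine ⟨m, ?_⟩
  rintro _ ⟨V, ⟨hV, hyV⟩, rfl⟩
  obtain ⟨x, hx⟩ := denseRange_stoneCechUnit.exists_mem_open hV ⟨y, hyV⟩
  exact (hm ⟨x, rfl⟩).trans (le_csSup (hf_above.mono (image_subset_range _ _)) ⟨x, hx, rfl⟩)

theorem sInf_le_scLowerExt (hf_above : BddAbove (range f)) (hf_below : BddBelow (range f))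
    (hU : IsOpen U) (hyU : y ∈ U) :
    sInf (f '' (stoneCechUnit ⁻¹' U)) ≤ scLowerExt f y := by
  refine le_csSup ?_ ⟨U, ⟨hU, hyU⟩, rfl⟩
  obtain ⟨M, hM⟩ := hf_above
  refine ⟨M, ?_⟩
  rintro _ ⟨V, ⟨hV, hyV⟩, rfl⟩
  obtain ⟨x, hx⟩ := denseRange_stoneCechUnit.exists_mem_open hV ⟨y, hyV⟩
  exact (csInf_le (hf_below.mono (image_subset_range _ _)) ⟨x, hx, rfl⟩).trans (hM ⟨x, rfl⟩)

theorem mem_closure_image_stoneCechUnit_of_lt_scUpperExt (hf_above : BddAbove (range f))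
    (hf_below : BddBelow (range f)) {c : ℝ} (hc : c < scUpperExt f y) :
    y ∈ closure (stoneCechUnit '' (f ⁻¹' Ioi c)) := by
  refine mem_closure_iff.2 fun U hU hyU => ?_
  obtain ⟨x₀, hx₀⟩ := denseRange_stoneCechUnit.exists_mem_open hU ⟨y, hyU⟩
  obtain ⟨_, ⟨x, hx, rfl⟩, hcx⟩ := exists_lt_of_lt_csSup (Nonempty.image f ⟨x₀, hx₀⟩)
    (hc.trans_le (scUpperExt_le_sSup hf_above hf_below hU hyU))
  exact ⟨stoneCechUnit x, hx, x, hcx, rfl⟩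

theorem mem_closure_image_stoneCechUnit_of_scLowerExt_lt (hf_above : BddAbove (range f))
    (hf_below : BddBelow (range f)) {c : ℝ} (hc : scLowerExt f y < c) :
    y ∈ closure (stoneCechUnit '' (f ⁻¹' Iio c)) := by
  refine mem_closure_iff.2 fun U hU hyU => ?_
  obtain ⟨x₀, hx₀⟩ := denseRange_stoneCechUnit.exists_mem_open hU ⟨y, hyU⟩
  obtain ⟨_, ⟨x, hx, rfl⟩, hcx⟩ := exists_lt_of_csInf_lt (Nonempty.image f ⟨x₀, hx₀⟩)
    ((sInf_le_scLowerExt hf_above hf_below hU hyU).trans_lt hc)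
  exact ⟨stoneCechUnit x, hx, x, hcx, rfl⟩

end StoneCech

theorem stmt_5_general {X : Type*} [TopologicalSpace X] [NormalSpace X]
    (f g : X → ℝ)
    (hfb : ∃ M : ℝ, ∀ x, |f x| ≤ M) (hgb : ∃ M : ℝ, ∀ x, |g x| ≤ M)
    (hf : ∀ l : ℝ, IsOpen (f ⁻¹' Set.Iio l)) (hg : ∀ l : ℝ, IsOpen (g ⁻¹' Set.Ioi l))
    (hfg : ∀ x, f x ≤ g x) :
    ∀ y : StoneCech X, scUpperExt f y ≤ scLowerExt g y := by
  obtain ⟨M, hM⟩ := hfb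
  obtain ⟨N, hN⟩ := hgb
  have hf_above : BddAbove (range f) := ⟨M, forall_mem_range.2 fun x => (abs_le.1 (hM x)).2⟩
  have hf_below : BddBelow (range f) := ⟨-M, forall_mem_range.2 fun x => (abs_le.1 (hM x)).1⟩
  have hg_above : BddAbove (range g) := ⟨N, forall_mem_range.2 fun x => (abs_le.1 (hN x)).2⟩
  have hg_below : BddBelow (range g) := ⟨-N, forall_mem_range.2 fun x => (abs_le.1 (hN x)).1⟩
  intro y
  by_contra! hlt
  obtain ⟨c', hgc', hc'⟩ := exists_between hlt
  obtain ⟨c, hc'c, hcf⟩ := exists_between hc'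
  have hdisj : Disjoint (f ⁻¹' Ici c) (g ⁻¹' Iic c') :=
    disjoint_left.2 fun x (hfx : c ≤ f x) (hgx : g x ≤ c') => by linarith [hfg x]
  have hyf : y ∈ closure (stoneCechUnit '' (f ⁻¹' Ici c)) :=
    closure_mono (image_mono (preimage_mono Ioi_subset_Ici_self))
      (mem_closure_image_stoneCechUnit_of_lt_scUpperExt hf_above hf_below hcf)
  have hyg : y ∈ closure (stoneCechUnit '' (g ⁻¹' Iic c')) :=
    closure_mono (image_mono (preimage_mono Iio_subset_Iic_self))
      (mem_closure_image_stoneCechUnit_of_scLowerExt_lt hg_above hg_below hgc')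
  exact disjoint_left.1 (disjoint_closure_image_stoneCechUnit
    ((upperSemicontinuous_iff_isOpen_preimage.2 hf).isClosed_preimage c)
    ((lowerSemicontinuous_iff_isOpen_preimage.2 hg).isClosed_preimage c') hdisj) hyf hyg

/-- For a normal Hausdorff space `X`, if `f` is bounded usc, `g` is bounded
lsc and `f ≤ g` on `X`, then `U(f) ≤ L(g)` on `βX`. -/
theorem stmt_5 {X : Type*} [TopologicalSpace X] [NormalSpace X] [T2Space X]
    (f g : X → ℝ)
    (hfb : ∃ M : ℝ, ∀ x, |f x| ≤ M) (hgb : ∃ M : ℝ, ∀ x, |g x| ≤ M)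
    (hf : ∀ l : ℝ, IsOpen (f ⁻¹' Set.Iio l)) (hg : ∀ l : ℝ, IsOpen (g ⁻¹' Set.Ioi l))
    (hfg : ∀ x, f x ≤ g x) :
    ∀ y : StoneCech X, scUpperExt f y ≤ scLowerExt g y :=
  stmt_5_general f g hfb hgb hf hg hfg
end

section
/- (Katětov–Tong theorem) Let X be a normal Hausdorff space. If f is a bounded upper semicontinuous real-valued function on X and g is a bounded lower semicontinuous real-valued function on X with f(x) ≤ g(x) for all x ∈ X, then there exists a bounded continuous function h : X → ℝ with f(x) ≤ h(x) ≤ g(x) for all x ∈ X. -/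
/-!
For `ε > 0`, Urysohn functions `φᵢ` that vanish on `{v ≤ a + iε}` and equal `1` on
`{u ≥ a + (i+1)ε}` (disjoint closed sets, as `u ≤ v`) add up to a continuous
`a + ε ∑ φᵢ` lying within `ε` of the band `[u, v]`. Applying this to
`max f (h - ε) ≤ min g (h + ε)`, where `h` is the previous approximation, halves the error
while moving `h` by at most `3ε/2`; the resulting approximations converge uniformly to a
continuous function squeezed between `f` and `g`.
-/

open Finset Filter Topology

theorem Finset.natCast_le_sum_range_of_forall_lt_eq_one {c : ℕ → ℝ} {k N : ℕ} (hkN : k ≤ N)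
    (hc0 : ∀ i, 0 ≤ c i) (hc1 : ∀ i < k, c i = 1) : (k : ℝ) ≤ ∑ i ∈ range N, c i :=
  calc (k : ℝ) = ∑ i ∈ range k, c i := by
        rw [sum_congr rfl fun i hi => hc1 i (mem_range.1 hi)]; simp
    _ ≤ ∑ i ∈ range N, c i :=
        sum_le_sum_of_subset_of_nonneg (range_subset_range.2 hkN) fun i _ _ => hc0 i

theorem Finset.sum_range_le_natCast_of_forall_le_eq_zero {c : ℕ → ℝ} {m : ℕ} (N : ℕ)
    (hc1 : ∀ i, c i ≤ 1) (hc0 : ∀ i, m ≤ i → c i = 0) : ∑ i ∈ range N, c i ≤ m :=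
  calc ∑ i ∈ range N, c i ≤ ∑ i ∈ range N, if i < m then 1 else 0 := by
        refine sum_le_sum fun i _ => ?_
        split_ifs with h
        · exact hc1 i
        · exact (hc0 i (not_lt.1 h)).le
    _ = #{i ∈ range N | i < m} := by rw [sum_boole]
    _ ≤ m := by
        exact_mod_cast (card_le_card fun i hi => mem_range.2 (mem_filter.1 hi).2).trans
          (card_range m).le

theorem exists_continuous_tendsto_of_norm_succ_sub_le {X E : Type*} [TopologicalSpace X]
    [NormedAddCommGroup E] [CompleteSpace E] {h : ℕ → X → E} (hc : ∀ n, Continuous (h n))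
    {u : ℕ → ℝ} (hu : Summable u) (hle : ∀ n x, ‖h (n + 1) x - h n x‖ ≤ u n) :
    ∃ H : X → E, Continuous H ∧ ∀ x, Tendsto (fun n => h n x) atTop (𝓝 (H x)) := by
  refine ⟨fun x => h 0 x + ∑' n, (h (n + 1) x - h n x),
    (hc 0).add (continuous_tsum (fun n => (hc (n + 1)).sub (hc n)) hu hle), fun x => ?_⟩
  have hsum : Summable fun n => h (n + 1) x - h n x := .of_norm_bounded hu fun n => hle n x
  have := (tendsto_const_nhds (x := h 0 x)).add hsum.hasSum.tendsto_sum_nat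
  simpa only [sum_range_sub (fun n => h n x), add_sub_cancel] using this

theorem exists_continuous_sub_le_le_add {X : Type*} [TopologicalSpace X] [NormalSpace X]
    {u v : X → ℝ} (hu : UpperSemicontinuous u) (hv : LowerSemicontinuous v) (huv : u ≤ v)
    {a b : ℝ} (hav : ∀ x, a ≤ v x) (hub : ∀ x, u x ≤ b) {ε : ℝ} (hε : 0 < ε) :
    ∃ w : C(X, ℝ), ∀ x, u x - ε ≤ w x ∧ w x ≤ v x + ε := by
  have hdisj (i : ℕ) : Disjoint (v ⁻¹' Set.Iic (a + i * ε)) (u ⁻¹' Set.Ici (a + (i + 1) * ε)) :=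
    Set.disjoint_left.2 fun x hv hu => by
      have := huv x
      simp only [Set.mem_preimage, Set.mem_Iic, Set.mem_Ici] at hv hu
      linarith
  choose φ hφ0 hφ1 hφ01 using fun i : ℕ => exists_continuous_zero_one_of_isClosed
    (hv.isClosed_preimage (a + i * ε)) (hu.isClosed_preimage (a + (i + 1) * ε)) (hdisj i)
  set N := ⌈(b - a) / ε⌉₊
  refine ⟨⟨fun x => a + ε * ∑ i ∈ range N, φ i x, by fun_prop⟩, fun x => ⟨?_, ?_⟩⟩
  · set k := ⌊(u x - a) / ε⌋₊
    have hφ_eq_one (i : ℕ) (hi : i < k) : φ i x = 1 := by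
      refine hφ1 i ?_
      have := (Nat.le_floor_iff' i.succ_ne_zero).1 hi
      push_cast at this
      simp only [Set.mem_preimage, Set.mem_Ici]
      linarith [(le_div_iff₀ hε).1 this]
    rcases le_total k N with hkN | hNk
    · have hsum := natCast_le_sum_range_of_forall_lt_eq_one hkN (fun i => (hφ01 i x).1) hφ_eq_one
      have hk : u x - a < (k + 1) * ε := (div_lt_iff₀ hε).1 (Nat.lt_floor_add_one _)
      simp only [ContinuousMap.coe_mk]
      linarith [mul_le_mul_of_nonneg_left hsum hε.le]
    · have hsum := natCast_le_sum_range_of_forall_lt_eq_one le_rfl (fun i => (hφ01 i x).1)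
        fun i hi => hφ_eq_one i (hi.trans_le hNk)
      have hN : b - a ≤ N * ε := (div_le_iff₀ hε).1 (Nat.le_ceil _)
      simp only [ContinuousMap.coe_mk]
      linarith [hub x, mul_le_mul_of_nonneg_left hsum hε.le]
  · set m := ⌈(v x - a) / ε⌉₊
    have hφ_eq_zero (i : ℕ) (hi : m ≤ i) : φ i x = 0 := by
      refine hφ0 i ?_
      have := Nat.ceil_le.1 hi
      simp only [Set.mem_preimage, Set.mem_Iic]
      linarith [(div_le_iff₀ hε).1 this]
    have hsum := sum_range_le_natCast_of_forall_le_eq_zero N (fun i => (hφ01 i x).2) hφ_eq_zero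
    have hm : (m - 1) * ε < v x - a := (lt_div_iff₀ hε).1 <| sub_lt_iff_lt_add.2 <|
      Nat.ceil_lt_add_one (div_nonneg (sub_nonneg.2 (hav x)) hε.le)
    simp only [ContinuousMap.coe_mk]
    linarith [mul_le_mul_of_nonneg_left hsum hε.le]

theorem exists_seq_of_exists_succ {α : Type*} {P : ℕ → α → Prop} {R : ℕ → α → α → Prop}
    (h0 : ∃ a, P 0 a) (hsucc : ∀ n a, P n a → ∃ b, P (n + 1) b ∧ R n a b) :
    ∃ s : ℕ → α, ∀ n, P n (s n) ∧ R n (s n) (s (n + 1)) := by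
  obtain ⟨a₀, ha₀⟩ := h0
  choose F hFP hFR using hsucc
  let s : ∀ n, {a // P n a} := fun n =>
    Nat.rec ⟨a₀, ha₀⟩ (fun n a => ⟨F n a a.2, hFP n a a.2⟩) n
  exact ⟨fun n => (s n).1, fun n => ⟨(s n).2, hFR n _ (s n).2⟩⟩

theorem exists_continuous_refine_approx {X : Type*} [TopologicalSpace X] [NormalSpace X]
    {f g : X → ℝ} (hf : UpperSemicontinuous f) (hg : LowerSemicontinuous g) (hfg : f ≤ g) {a b : ℝ}
    (ha : ∀ x, a ≤ f x) (hb : ∀ x, g x ≤ b) {ε : ℝ} (hε : 0 < ε) (h : C(X, ℝ))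
    (hh : ∀ x, f x - ε ≤ h x ∧ h x ≤ g x + ε) :
    ∃ h' : C(X, ℝ), (∀ x, f x - ε / 2 ≤ h' x ∧ h' x ≤ g x + ε / 2) ∧
      ∀ x, |h' x - h x| ≤ 3 / 2 * ε := by
  set u := fun x => max (f x) (h x - ε)
  set v := fun x => min (g x) (h x + ε)
  have hu : UpperSemicontinuous u := hf.sup (h.continuous.sub continuous_const).upperSemicontinuous
  have hv : LowerSemicontinuous v := hg.inf (h.continuous.add continuous_const).lowerSemicontinuous
  have huv : u ≤ v := fun x => by
    have := hh x
    exact max_le (le_min (hfg x) (by linarith)) (le_min (by linarith) (by linarith))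
  have hav (x : X) : a ≤ v x := by
    have := ha x; have := hfg x; have := hh x
    exact le_min (by linarith) (by linarith)
  have hub (x : X) : u x ≤ b := by
    have := hb x; have := hfg x; have := hh x
    exact max_le (by linarith) (by linarith)
  obtain ⟨w, hw⟩ := exists_continuous_sub_le_le_add hu hv huv hav hub (half_pos hε)
  refine ⟨w, fun x => ?_, fun x => ?_⟩
  · have := hw x; have := le_max_left (f x) (h x - ε); have := min_le_left (g x) (h x + ε)
    exact ⟨by linarith, by linarith⟩
  · have := hw x; have := le_max_right (f x) (h x - ε); have := min_le_right (g x) (h x + ε)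
    exact abs_le.2 ⟨by linarith, by linarith⟩

theorem exists_continuous_between {X : Type*} [TopologicalSpace X] [NormalSpace X] {f g : X → ℝ}
    (hf : UpperSemicontinuous f) (hg : LowerSemicontinuous g) (hfg : f ≤ g) {a b : ℝ}
    (ha : ∀ x, a ≤ f x) (hb : ∀ x, g x ≤ b) :
    ∃ h : X → ℝ, Continuous h ∧ f ≤ h ∧ h ≤ g := by
  obtain ⟨h₀, hh₀⟩ := exists_continuous_sub_le_le_add hf hg hfg (fun x => (ha x).trans (hfg x))
    (fun x => (hfg x).trans (hb x)) one_pos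
  obtain ⟨s, hs⟩ := exists_seq_of_exists_succ
    (P := fun n h => ∀ x, f x - (1 / 2) ^ n ≤ h x ∧ h x ≤ g x + (1 / 2) ^ n)
    (R := fun n h h' => ∀ x, |h' x - h x| ≤ 3 / 2 * (1 / 2) ^ n)
    ⟨h₀, by simpa using hh₀⟩ fun n h hh => by
      simpa only [pow_succ, mul_one_div] using
        exists_continuous_refine_approx hf hg hfg ha hb (by positivity) h hh
  obtain ⟨H, hHc, hlim⟩ := exists_continuous_tendsto_of_norm_succ_sub_le
    (fun n => (s n).continuous) (summable_geometric_two.mul_left (3 / 2)) fun n => (hs n).2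
  have he : Tendsto (fun n => (1 / 2 : ℝ) ^ n) atTop (𝓝 0) :=
    tendsto_pow_atTop_nhds_zero_of_lt_one (by norm_num) (by norm_num)
  refine ⟨H, hHc, fun x => ?_, fun x => ?_⟩
  · refine le_of_tendsto_of_tendsto' ?_ (hlim x) fun n => ((hs n).1 x).1
    simpa using tendsto_const_nhds.sub he
  · refine le_of_tendsto_of_tendsto' (hlim x) ?_ fun n => ((hs n).1 x).2
    simpa using tendsto_const_nhds.add he

theorem stmt_6_general {X : Type*} [TopologicalSpace X] [NormalSpace X]
    (f g : X → ℝ)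
    (hfb : ∃ M : ℝ, ∀ x, |f x| ≤ M) (hgb : ∃ M : ℝ, ∀ x, |g x| ≤ M)
    (hf : ∀ l : ℝ, IsOpen (f ⁻¹' Set.Iio l)) (hg : ∀ l : ℝ, IsOpen (g ⁻¹' Set.Ioi l))
    (hfg : ∀ x, f x ≤ g x) :
    ∃ h : X → ℝ, Continuous h ∧ (∃ M : ℝ, ∀ x, |h x| ≤ M) ∧
      ∀ x, f x ≤ h x ∧ h x ≤ g x := by
  obtain ⟨Mf, hMf⟩ := hfb
  obtain ⟨Mg, hMg⟩ := hgb
  obtain ⟨h, hc, hfh, hhg⟩ := exists_continuous_between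
    (upperSemicontinuous_iff_isOpen_preimage.2 hf) (lowerSemicontinuous_iff_isOpen_preimage.2 hg)
    hfg (fun x => neg_le_of_abs_le (hMf x)) (fun x => le_of_abs_le (hMg x))
  refine ⟨h, hc, ⟨max Mf Mg, fun x => abs_le.2 ⟨?_, ?_⟩⟩, fun x => ⟨hfh x, hhg x⟩⟩
  · linarith [neg_le_of_abs_le (hMf x), hfh x, le_max_left Mf Mg]
  · linarith [le_of_abs_le (hMg x), hhg x, le_max_right Mf Mg]

/-- Katětov–Tong: On a normal Hausdorff space, if `f` is bounded usc,
`g` is bounded lsc, and `f ≤ g`, then there is a bounded continuous `h` with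
`f ≤ h ≤ g`. -/
theorem stmt_6 {X : Type*} [TopologicalSpace X] [NormalSpace X] [T2Space X]
    (f g : X → ℝ)
    (hfb : ∃ M : ℝ, ∀ x, |f x| ≤ M) (hgb : ∃ M : ℝ, ∀ x, |g x| ≤ M)
    (hf : ∀ l : ℝ, IsOpen (f ⁻¹' Set.Iio l)) (hg : ∀ l : ℝ, IsOpen (g ⁻¹' Set.Ioi l))
    (hfg : ∀ x, f x ≤ g x) :
    ∃ h : X → ℝ, Continuous h ∧ (∃ M : ℝ, ∀ x, |h x| ≤ M) ∧
      ∀ x, f x ≤ h x ∧ h x ≤ g x :=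
  stmt_6_general f g hfb hgb hf hg hfg
end

section
/- Let X be a normal Hausdorff space, viewed as a dense subspace of its Stone–Čech compactification βX. If C and D are disjoint closed subsets of X, then the closures of C and D in βX are disjoint. -/
/-! An Urysohn function `f : X → [0, 1]` that is `0` on `C` and `1` on `D` extends to a
continuous map `βX → [0, 1]`; this extension is still `0` on the closure of `C` and `1` on the
closure of `D`, so those closures are disjoint. -/

open Set

section StoneCech

variable {X Y : Type*} [TopologicalSpace X] [TopologicalSpace Y] [CompactSpace Y] [T2Space Y]
  {f : X → Y}

theorem closure_image_stoneCechUnit_subset_preimage_stoneCechExtend (hf : Continuous f)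
    {s : Set X} {t : Set Y} (ht : IsClosed t) (hst : MapsTo f s t) :
    closure (stoneCechUnit '' s) ⊆ stoneCechExtend hf ⁻¹' t := by
  refine closure_minimal ?_ (ht.preimage (continuous_stoneCechExtend hf))
  rintro _ ⟨x, hx, rfl⟩
  simpa only [mem_preimage, stoneCechExtend_stoneCechUnit] using hst hx

theorem disjoint_closure_image_stoneCechUnit_s7 (hf : Continuous f) {s t : Set X} {u v : Set Y}
    (hu : IsClosed u) (hv : IsClosed v) (huv : Disjoint u v) (hsu : MapsTo f s u)
    (htv : MapsTo f t v) :
    Disjoint (closure (stoneCechUnit '' s)) (closure (stoneCechUnit '' t)) :=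
  (huv.preimage (stoneCechExtend hf)).mono
    (closure_image_stoneCechUnit_subset_preimage_stoneCechExtend hf hu hsu)
    (closure_image_stoneCechUnit_subset_preimage_stoneCechExtend hf hv htv)

end StoneCech

theorem stmt_7_general {X : Type*} [TopologicalSpace X] [NormalSpace X]
    (C D : Set X) (hC : IsClosed C) (hD : IsClosed D) (hCD : Disjoint C D) :
    Disjoint (closure (stoneCechUnit '' C : Set (StoneCech X)))
      (closure (stoneCechUnit '' D : Set (StoneCech X))) := by
  obtain ⟨f, hf0, hf1, hfI⟩ := exists_continuous_zero_one_of_isClosed hC hD hCD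
  let g : X → Icc (0 : ℝ) 1 := codRestrict f _ hfI
  have hg0 : MapsTo g C {⟨0, left_mem_Icc.2 zero_le_one⟩} := fun x hx => Subtype.ext (hf0 hx)
  have hg1 : MapsTo g D {⟨1, right_mem_Icc.2 zero_le_one⟩} := fun x hx => Subtype.ext (hf1 hx)
  refine disjoint_closure_image_stoneCechUnit_s7 (f.continuous.codRestrict hfI) isClosed_singleton
    isClosed_singleton (by simp) hg0 hg1

/-- For a normal Hausdorff space `X`, disjoint closed subsets of `X` have
disjoint closures in the Stone–Čech compactification `βX`. -/
theorem stmt_7 {X : Type*} [TopologicalSpace X] [NormalSpace X] [T2Space X]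
    (C D : Set X) (hC : IsClosed C) (hD : IsClosed D) (hCD : Disjoint C D) :
    Disjoint (closure (stoneCechUnit '' C : Set (StoneCech X)))
      (closure (stoneCechUnit '' D : Set (StoneCech X))) :=
  stmt_7_general C D hC hD hCD
end

section
/- Let X be a completely regular Hausdorff space that is not normal, viewed as a dense subspace of its Stone–Čech compactification βX. Then there exist a bounded upper semicontinuous function f on X and a bounded lower semicontinuous function g on X with f ≤ g pointwise on X, but such that U(f)(y) > L(g)(y) for some y ∈ βX, where U(f)(y) = inf over open neighborhoods U of y in βX of sup_{x ∈ U ∩ X} f(x) and L(g)(y) = sup over open neighborhoods U of y in βX of inf_{x ∈ U ∩ X} g(x). -/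
open Set

theorem exists_isClosed_disjoint_not_separatedNhds {X : Type*} [TopologicalSpace X]
    (h : ¬ NormalSpace X) :
    ∃ A B : Set X, IsClosed A ∧ IsClosed B ∧ Disjoint A B ∧ ¬ SeparatedNhds A B := by
  by_contra! hsep
  exact h ⟨hsep⟩

theorem exists_mem_closure_image_inter_of_not_separatedNhds {X Y : Type*}
    [TopologicalSpace X] [TopologicalSpace Y] [NormalSpace Y] {e : X → Y} (he : Continuous e)
    {A B : Set X} (hAB : ¬ SeparatedNhds A B) :
    ∃ y, y ∈ closure (e '' A) ∧ y ∈ closure (e '' B) := by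
  by_contra! h
  have hdisj : Disjoint (closure (e '' A)) (closure (e '' B)) :=
    disjoint_left.mpr fun y hyA hyB => h y hyA hyB
  exact hAB <|
    (((normal_separation isClosed_closure isClosed_closure hdisj).mono subset_closure
      subset_closure).preimage he).mono (subset_preimage_image e A) (subset_preimage_image e B)

theorem le_scUpperExt_of_mem_closure {X : Type*} [TopologicalSpace X] {f : X → ℝ}
    (hf : BddAbove (range f)) {A : Set X} {c : ℝ} (hA : ∀ x ∈ A, c ≤ f x) {y : StoneCech X}
    (hy : y ∈ closure (stoneCechUnit '' A)) : c ≤ scUpperExt f y := by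
  refine le_csInf ⟨_, univ, ⟨isOpen_univ, mem_univ y⟩, rfl⟩ ?_
  rintro _ ⟨U, ⟨hU, hyU⟩, rfl⟩
  obtain ⟨_, hxU, x, hxA, rfl⟩ := mem_closure_iff.mp hy U hU hyU
  exact (hA x hxA).trans (le_csSup (hf.mono (image_subset_range _ _)) ⟨x, hxU, rfl⟩)

theorem scLowerExt_le_of_mem_closure {X : Type*} [TopologicalSpace X] {g : X → ℝ}
    (hg : BddBelow (range g)) {B : Set X} {c : ℝ} (hB : ∀ x ∈ B, g x ≤ c) {y : StoneCech X}
    (hy : y ∈ closure (stoneCechUnit '' B)) : scLowerExt g y ≤ c := by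
  refine csSup_le ⟨_, univ, ⟨isOpen_univ, mem_univ y⟩, rfl⟩ ?_
  rintro _ ⟨U, ⟨hU, hyU⟩, rfl⟩
  obtain ⟨_, hxU, x, hxB, rfl⟩ := mem_closure_iff.mp hy U hU hyU
  exact (csInf_le (hg.mono (image_subset_range _ _)) ⟨x, hxU, rfl⟩).trans (hB x hxB)

theorem indicator_one_mem_Icc {X : Type*} (s : Set X) (x : X) :
    s.indicator (fun _ => (1 : ℝ)) x ∈ Icc 0 1 := by
  by_cases hx : x ∈ s <;> simp [hx]

theorem abs_indicator_one_le {X : Type*} (s : Set X) (x : X) :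
    |s.indicator (fun _ => (1 : ℝ)) x| ≤ 1 :=
  abs_le.mpr ⟨by linarith [(indicator_one_mem_Icc s x).1], (indicator_one_mem_Icc s x).2⟩

theorem stmt_9_general {X : Type*} [TopologicalSpace X]
    (hnotnormal : ¬ NormalSpace X) :
    ∃ f g : X → ℝ,
      (∃ M : ℝ, ∀ x, |f x| ≤ M) ∧ (∃ M : ℝ, ∀ x, |g x| ≤ M) ∧
      (∀ l : ℝ, IsOpen (f ⁻¹' Set.Iio l)) ∧ (∀ l : ℝ, IsOpen (g ⁻¹' Set.Ioi l)) ∧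
      (∀ x, f x ≤ g x) ∧
      ∃ y : StoneCech X, scLowerExt g y < scUpperExt f y := by
  obtain ⟨A, B, hA, hB, hAB, hsep⟩ := exists_isClosed_disjoint_not_separatedNhds hnotnormal
  obtain ⟨y, hyA, hyB⟩ :=
    exists_mem_closure_image_inter_of_not_separatedNhds continuous_stoneCechUnit hsep
  refine ⟨A.indicator fun _ => 1, Bᶜ.indicator fun _ => 1, ⟨1, abs_indicator_one_le A⟩,
    ⟨1, abs_indicator_one_le Bᶜ⟩, (hA.upperSemicontinuous_indicator zero_le_one).isOpen_preimage,
    (hB.isOpen_compl.lowerSemicontinuous_indicator zero_le_one).isOpen_preimage,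
    indicator_le_indicator_of_subset hAB.subset_compl_right fun _ => zero_le_one, y, ?_⟩
  calc scLowerExt (Bᶜ.indicator fun _ => 1) y
      ≤ 0 := scLowerExt_le_of_mem_closure
          ⟨0, forall_mem_range.mpr fun x => (indicator_one_mem_Icc Bᶜ x).1⟩
          (fun x hx => (indicator_of_notMem (notMem_compl_iff.mpr hx) _).le) hyB
    _ < 1 := zero_lt_one
    _ ≤ scUpperExt (A.indicator fun _ => 1) y := le_scUpperExt_of_mem_closure
          ⟨1, forall_mem_range.mpr fun x => (indicator_one_mem_Icc A x).2⟩
          (fun x hx => (indicator_of_mem hx _).ge) hyA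

/-- If `X` is completely regular Hausdorff but not normal, then there are a
bounded usc `f` and a bounded lsc `g` on `X` with `f ≤ g`, yet `U(f)(y) > L(g)(y)` for
some `y ∈ βX`. -/
theorem stmt_9 {X : Type*} [TopologicalSpace X] [CompletelyRegularSpace X] [T2Space X]
    (hnotnormal : ¬ NormalSpace X) :
    ∃ f g : X → ℝ,
      (∃ M : ℝ, ∀ x, |f x| ≤ M) ∧ (∃ M : ℝ, ∀ x, |g x| ≤ M) ∧
      (∀ l : ℝ, IsOpen (f ⁻¹' Set.Iio l)) ∧ (∀ l : ℝ, IsOpen (g ⁻¹' Set.Ioi l)) ∧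
      (∀ x, f x ≤ g x) ∧
      ∃ y : StoneCech X, scLowerExt g y < scUpperExt f y :=
  stmt_9_general hnotnormal
end

section
/- Let X be a compact Hausdorff space and let A be an ℓ-subalgebra of C(X) that separates the points of X. If f is a bounded upper semicontinuous real-valued function on X, then f is closed relative to A, i.e., f is the pointwise infimum of some subset of A. -/
/-!
Fix `x` and `c > f x`. Strong separation gives, for every `y`, some `b_y ∈ A` with
`b_y x < c` and `f y < b_y y`. Upper semicontinuity makes `{f < b_y}` open, so finitely many
of these sets cover `X`, and the supremum of the corresponding `b_y` lies in `A`, dominates `f`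
strictly and is still `< c` at `x`. Hence `f` is the infimum of the elements of `A` above it.
-/

theorem UpperSemicontinuous.isOpen_setOf_lt {X : Type*} [TopologicalSpace X] {f : X → ℝ}
    (hf : UpperSemicontinuous f) (g : C(X, ℝ)) : IsOpen {z | f z < g z} :=
  isOpen_iff_mem_nhds.2 fun z (hz : f z < g z) => by
    obtain ⟨q, hfq, hqg⟩ := exists_between hz
    filter_upwards [hf z q hfq, g.continuous.continuousAt.eventually (lt_mem_nhds hqg)]
      with w hfw hgw using hfw.trans hgw

theorem UpperSemicontinuous.exists_mem_forall_lt_of_supClosed {X : Type*} [TopologicalSpace X]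
    [CompactSpace X] {S : Set C(X, ℝ)} (hS : SupClosed S) {f : X → ℝ}
    (hf : UpperSemicontinuous f) {x : X} {c : ℝ} (h : ∀ y, ∃ b ∈ S, b x < c ∧ f y < b y) :
    ∃ a ∈ S, (∀ z, f z < a z) ∧ a x < c := by
  choose b hbS hbx hby using h
  obtain ⟨t, ht⟩ := isCompact_univ.elim_finite_subcover (fun y => {z | f z < b y z})
    (fun y => hf.isOpen_setOf_lt (b y)) fun z _ => Set.mem_iUnion.2 ⟨z, hby z⟩
  have hcov : ∀ z, ∃ y ∈ t, f z < b y z := fun z => by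
    simpa only [Set.mem_iUnion, exists_prop, Set.mem_ofPred_eq] using ht (Set.mem_univ z)
  have htne : t.Nonempty := let ⟨y, hy, _⟩ := hcov x; ⟨y, hy⟩
  refine ⟨t.sup' htne b, hS.finsetSup'_mem htne fun y _ => hbS y, fun z => ?_, ?_⟩
  · obtain ⟨y, hyt, hyz⟩ := hcov z
    rw [ContinuousMap.sup'_apply]
    exact hyz.trans_le (Finset.le_sup' (fun y => b y z) hyt)
  · rw [ContinuousMap.sup'_apply]
    exact (Finset.sup'_lt_iff htne).2 fun y _ => hbx y

theorem UpperSemicontinuous.exists_mem_subalgebra_forall_lt {X : Type*} [TopologicalSpace X]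
    [CompactSpace X] {A : Subalgebra ℝ C(X, ℝ)} (hsup : SupClosed (A : Set C(X, ℝ)))
    (hsep : A.SeparatesPoints) {f : X → ℝ} (hf : UpperSemicontinuous f) {x : X} {c : ℝ}
    (hc : f x < c) : ∃ a ∈ A, (∀ z, f z < a z) ∧ a x < c := by
  set δ := (c - f x) / 2
  refine hf.exists_mem_forall_lt_of_supClosed hsup fun y => ?_
  obtain ⟨b, hbA, hbx, hby⟩ := hsep.strongly (fun z => f z + δ) x y
  exact ⟨b, hbA, by simp only [hbx, δ]; linarith, by simp only [hby, δ]; linarith⟩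

theorem stmt_12_general {X : Type*} [TopologicalSpace X] [CompactSpace X]
    (A : Subalgebra ℝ (ContinuousMap X ℝ))
    (hlat : ∀ f ∈ A, ∀ g ∈ A, f ⊔ g ∈ A ∧ f ⊓ g ∈ A)
    (hsep : ∀ x y : X, x ≠ y → ∃ a ∈ A, a x ≠ a y)
    (f : X → ℝ)
    (hf : ∀ l : ℝ, IsOpen (f ⁻¹' Set.Iio l)) :
    ∃ S : Set (ContinuousMap X ℝ), S ⊆ (A : Set (ContinuousMap X ℝ)) ∧
      ∀ x, f x = sInf ((fun a => a x) '' S) := by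
  have key : ∀ x c, f x < c → ∃ a ∈ A, (∀ z, f z < a z) ∧ a x < c :=
    fun _ _ => (upperSemicontinuous_iff_isOpen_preimage.2 hf).exists_mem_subalgebra_forall_lt
      (fun a ha b hb => (hlat a ha b hb).1)
      (fun x y hxy => let ⟨a, ha, hne⟩ := hsep x y hxy; ⟨a, ⟨a, ha, rfl⟩, hne⟩)
  refine ⟨{a ∈ A | ∀ z, f z < a z}, fun a ha => ha.1, fun x => ?_⟩
  refine (csInf_eq_of_forall_ge_of_forall_gt_exists_lt ?_ ?_ fun c hc => ?_).symm
  · obtain ⟨a, haA, hfa, -⟩ := key x (f x + 1) (lt_add_one _)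
    exact ⟨a x, a, ⟨haA, hfa⟩, rfl⟩
  · rintro _ ⟨a, ⟨-, hfa⟩, rfl⟩
    exact (hfa x).le
  · obtain ⟨a, haA, hfa, hac⟩ := key x c hc
    exact ⟨a x, ⟨a, ⟨haA, hfa⟩, rfl⟩, hac⟩

/-- For a compact Hausdorff `X` and an ℓ-subalgebra `A` of `C(X)` separating
points, every bounded usc function is a pointwise infimum of a subset of `A`. -/
theorem stmt_12 {X : Type*} [TopologicalSpace X] [CompactSpace X] [T2Space X]
    (A : Subalgebra ℝ (ContinuousMap X ℝ))
    (hlat : ∀ f ∈ A, ∀ g ∈ A, f ⊔ g ∈ A ∧ f ⊓ g ∈ A)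
    (hsep : ∀ x y : X, x ≠ y → ∃ a ∈ A, a x ≠ a y)
    (f : X → ℝ) (hfb : ∃ M : ℝ, ∀ x, |f x| ≤ M)
    (hf : ∀ l : ℝ, IsOpen (f ⁻¹' Set.Iio l)) :
    ∃ S : Set (ContinuousMap X ℝ), S ⊆ (A : Set (ContinuousMap X ℝ)) ∧
      ∀ x, f x = sInf ((fun a => a x) '' S) :=
  stmt_12_general A hlat hsep f hf
end

section
/- Let X be a compact Hausdorff space and let A be an ℓ-subalgebra of C(X) that separates the points of X. If g is a bounded lower semicontinuous real-valued function on X, then g is open relative to A, i.e., g is the pointwise supremum of some subset of A. -/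
/-!
A lower semicontinuous `g` on a completely regular space that is bounded below is the supremum of
the continuous functions below it: if `c < g x₀`, Urysohn's function for `x₀` and the closed set
`{g ≤ c}` interpolates between the value `c` at `x₀` and a lower bound of `g` off `{g > c}`.
On a compact space `g` is bounded below, and by Stone–Weierstrass each such continuous minorant can
be replaced, up to an arbitrarily small downward shift, by an element of `A`. Hence `g` is the
supremum of the elements of `A` lying below it.
-/

open Set

theorem LowerSemicontinuous.exists_continuousMap_le_of_lt {X : Type*} [TopologicalSpace X]
    [CompletelyRegularSpace X] {g : X → ℝ} (hg : LowerSemicontinuous g) {m : ℝ}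
    (hm : ∀ x, m ≤ g x) {x₀ : X} {c : ℝ} (hc : c < g x₀) :
    ∃ h : C(X, ℝ), (∀ x, h x ≤ g x) ∧ h x₀ = c := by
  obtain ⟨f, hf, hfx₀, hfK⟩ := CompletelyRegularSpace.completely_regular x₀ (g ⁻¹' Ioi c)ᶜ
    (hg.isOpen_preimage c).isClosed_compl (not_not.2 hc)
  refine ⟨⟨fun x => c + (m - c) * f x, by fun_prop⟩, fun x => ?_, by simp [hfx₀]⟩
  by_cases hx : c < g x
  · -- here `c + (m - c) * f x` is a convex combination of `c` and `m`, both at most `g x`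
    have hfx := (f x).2
    simp only [ContinuousMap.coe_mk]
    nlinarith [hm x, hfx.1, hfx.2]
  · simp [hfK hx, hm x]

theorem exists_mem_subalgebra_le_of_lt_of_lowerSemicontinuous {X : Type*} [TopologicalSpace X]
    [CompactSpace X] [T2Space X] (A : Subalgebra ℝ C(X, ℝ)) (hA : A.SeparatesPoints)
    {g : X → ℝ} (hg : LowerSemicontinuous g) {x₀ : X} {c : ℝ} (hc : c < g x₀) :
    ∃ a ∈ A, (∀ x, a x ≤ g x) ∧ c < a x₀ := by
  obtain ⟨y, -, hy⟩ := LowerSemicontinuousOn.exists_isMinOn ⟨x₀, mem_univ x₀⟩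
    isCompact_univ (hg.lowerSemicontinuousOn univ)
  obtain ⟨h, hhg, hhx₀⟩ := hg.exists_continuousMap_le_of_lt (m := g y) (fun x => hy (mem_univ x))
    (show (c + g x₀) / 2 < g x₀ by linarith)
  set ε := (g x₀ - c) / 4 with hε
  obtain ⟨⟨b, hbA⟩, hbh⟩ := ContinuousMap.exists_mem_subalgebra_near_continuousMap_of_separatesPoints
    A hA h ε (by positivity)
  have hclose : ∀ x, |b x - h x| < ε := fun x =>
    ((b - h).norm_coe_le_norm x).trans_lt hbh
  refine ⟨b - algebraMap ℝ C(X, ℝ) ε, sub_mem hbA (A.algebraMap_mem ε), fun x => ?_, ?_⟩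
  · have := (abs_sub_lt_iff.1 (hclose x)).1
    simp only [ContinuousMap.sub_apply, algebraMap_apply, smul_eq_mul, mul_one]
    linarith [hhg x]
  · have := (abs_sub_lt_iff.1 (hclose x₀)).2
    simp only [ContinuousMap.sub_apply, algebraMap_apply, smul_eq_mul, mul_one]
    linarith

theorem stmt_13_general {X : Type*} [TopologicalSpace X] [CompactSpace X] [T2Space X]
    (A : Subalgebra ℝ (ContinuousMap X ℝ))
    (hsep : ∀ x y : X, x ≠ y → ∃ a ∈ A, a x ≠ a y)
    (g : X → ℝ)
    (hg : ∀ l : ℝ, IsOpen (g ⁻¹' Set.Ioi l)) :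
    ∃ T : Set (ContinuousMap X ℝ), T ⊆ (A : Set (ContinuousMap X ℝ)) ∧
      ∀ x, g x = sSup ((fun a => a x) '' T) := by
  have hA : A.SeparatesPoints := fun x y hxy => by
    obtain ⟨a, haA, hne⟩ := hsep x y hxy
    exact ⟨a, ⟨a, haA, rfl⟩, hne⟩
  have approx : ∀ x c, c < g x → ∃ a ∈ A, (∀ y, a y ≤ g y) ∧ c < a x := fun _ _ hc =>
    exists_mem_subalgebra_le_of_lt_of_lowerSemicontinuous A hA
      (lowerSemicontinuous_iff_isOpen_preimage.2 hg) hc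
  refine ⟨{a | a ∈ A ∧ ∀ x, a x ≤ g x}, fun a ha => ha.1, fun x => ?_⟩
  obtain ⟨a, haA, hag, -⟩ := approx x _ (sub_one_lt (g x))
  symm
  refine csSup_eq_of_forall_le_of_forall_lt_exists_gt ⟨a x, a, ⟨haA, hag⟩, rfl⟩ ?_ ?_
  · rintro _ ⟨b, ⟨-, hbg⟩, rfl⟩
    exact hbg x
  · intro c hc
    obtain ⟨b, hbA, hbg, hcb⟩ := approx x c hc
    exact ⟨b x, ⟨b, ⟨hbA, hbg⟩, rfl⟩, hcb⟩

/-- For a compact Hausdorff `X` and an ℓ-subalgebra `A` of `C(X)` separating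
points, every bounded lsc function is a pointwise supremum of a subset of `A`. -/
theorem stmt_13 {X : Type*} [TopologicalSpace X] [CompactSpace X] [T2Space X]
    (A : Subalgebra ℝ (ContinuousMap X ℝ))
    (hlat : ∀ f ∈ A, ∀ g ∈ A, f ⊔ g ∈ A ∧ f ⊓ g ∈ A)
    (hsep : ∀ x y : X, x ≠ y → ∃ a ∈ A, a x ≠ a y)
    (g : X → ℝ) (hgb : ∃ M : ℝ, ∀ x, |g x| ≤ M)
    (hg : ∀ l : ℝ, IsOpen (g ⁻¹' Set.Ioi l)) :
    ∃ T : Set (ContinuousMap X ℝ), T ⊆ (A : Set (ContinuousMap X ℝ)) ∧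
      ∀ x, g x = sSup ((fun a => a x) '' T) :=
  stmt_13_general A hsep g hg
end

section
/- Let X be a compact Hausdorff space and let A be an ℓ-subalgebra of C(X) that separates the points of X. If h ∈ C(X), then h is clopen relative to A, i.e., h is both the pointwise infimum of some subset of A and the pointwise supremum of some subset of A. -/
/-!
By Stone–Weierstrass a point-separating subalgebra `A` is uniformly dense in `C(X)`. Since `A`
contains the constants, an `ε/2`-approximant of `h` shifted by `±ε/2` lies in `A`, dominates
(resp. is dominated by) `h`, and is within `ε` of it. Hence `h` is the pointwise infimum of the
elements of `A` above it and the pointwise supremum of those below it.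
-/

namespace ContinuousMap

variable {X : Type*} [TopologicalSpace X] [CompactSpace X] {A : Subalgebra ℝ C(X, ℝ)}

theorem dense_subalgebra_of_separatesPoints (w : A.SeparatesPoints) :
    Dense (A : Set C(X, ℝ)) := by
  rw [dense_iff_closure_eq, ← Subalgebra.topologicalClosure_coe,
    subalgebra_topologicalClosure_eq_top_of_separatesPoints A w, Algebra.coe_top]

theorem exists_mem_subalgebra_ge_lt_add (hA : Dense (A : Set C(X, ℝ))) (h : C(X, ℝ)) {ε : ℝ}
    (hε : 0 < ε) :
    ∃ a ∈ A, h ≤ a ∧ ∀ x, a x < h x + ε := by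
  obtain ⟨g, hgA, hg⟩ := hA.exists_dist_lt h (half_pos hε)
  refine ⟨g + algebraMap ℝ C(X, ℝ) (ε / 2), add_mem hgA (A.algebraMap_mem _),
    le_def.2 fun x => ?_, fun x => ?_⟩ <;>
  · have hx := (dist_apply_le_dist x).trans_lt hg
    rw [Real.dist_eq, abs_lt] at hx
    simp only [add_apply, algebraMap_apply, smul_eq_mul, mul_one]
    linarith

theorem exists_mem_subalgebra_le_sub_lt (hA : Dense (A : Set C(X, ℝ))) (h : C(X, ℝ)) {ε : ℝ}
    (hε : 0 < ε) :
    ∃ a ∈ A, a ≤ h ∧ ∀ x, h x - ε < a x := by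
  obtain ⟨a, ha, hle, hlt⟩ := exists_mem_subalgebra_ge_lt_add hA (-h) hε
  refine ⟨-a, neg_mem ha, le_def.2 fun x => ?_, fun x => ?_⟩ <;>
  · linarith [le_def.1 hle x, hlt x, neg_apply h x, neg_apply a x]

theorem sInf_eval_subalgebra_ge_eq (hA : Dense (A : Set C(X, ℝ))) (h : C(X, ℝ)) (x : X) :
    sInf ((fun a : C(X, ℝ) => a x) '' {a | a ∈ A ∧ h ≤ a}) = h x := by
  obtain ⟨a₀, ha₀, hle₀, -⟩ := exists_mem_subalgebra_ge_lt_add hA h one_pos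
  refine csInf_eq_of_forall_ge_of_forall_gt_exists_lt ⟨_, a₀, ⟨ha₀, hle₀⟩, rfl⟩ ?_
    fun w hw => ?_
  · rintro _ ⟨a, ⟨-, hle⟩, rfl⟩
    exact le_def.1 hle x
  · obtain ⟨a, ha, hle, hlt⟩ := exists_mem_subalgebra_ge_lt_add hA h (sub_pos.2 hw)
    exact ⟨a x, ⟨a, ⟨ha, hle⟩, rfl⟩, by linarith [hlt x]⟩

theorem sSup_eval_subalgebra_le_eq (hA : Dense (A : Set C(X, ℝ))) (h : C(X, ℝ)) (x : X) :
    sSup ((fun a : C(X, ℝ) => a x) '' {a | a ∈ A ∧ a ≤ h}) = h x := by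
  obtain ⟨a₀, ha₀, hle₀, -⟩ := exists_mem_subalgebra_le_sub_lt hA h one_pos
  refine csSup_eq_of_forall_le_of_forall_lt_exists_gt ⟨_, a₀, ⟨ha₀, hle₀⟩, rfl⟩ ?_
    fun w hw => ?_
  · rintro _ ⟨a, ⟨-, hle⟩, rfl⟩
    exact le_def.1 hle x
  · obtain ⟨a, ha, hle, hlt⟩ := exists_mem_subalgebra_le_sub_lt hA h (sub_pos.2 hw)
    exact ⟨a x, ⟨a, ⟨ha, hle⟩, rfl⟩, by linarith [hlt x]⟩

end ContinuousMap

theorem stmt_14_general {X : Type*} [TopologicalSpace X] [CompactSpace X]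
    (A : Subalgebra ℝ (ContinuousMap X ℝ))
    (hsep : ∀ x y : X, x ≠ y → ∃ a ∈ A, a x ≠ a y)
    (h : ContinuousMap X ℝ) :
    (∃ S : Set (ContinuousMap X ℝ), S ⊆ (A : Set (ContinuousMap X ℝ)) ∧
      ∀ x, h x = sInf ((fun a => a x) '' S)) ∧
    (∃ T : Set (ContinuousMap X ℝ), T ⊆ (A : Set (ContinuousMap X ℝ)) ∧
      ∀ x, h x = sSup ((fun a => a x) '' T)) := by
  have hA : Dense (A : Set C(X, ℝ)) :=
    ContinuousMap.dense_subalgebra_of_separatesPoints fun x y hxy => by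
      obtain ⟨a, ha, hne⟩ := hsep x y hxy
      exact ⟨a, ⟨a, ha, rfl⟩, hne⟩
  exact ⟨⟨{a | a ∈ A ∧ h ≤ a}, fun a ha => ha.1,
      fun x => (ContinuousMap.sInf_eval_subalgebra_ge_eq hA h x).symm⟩,
    ⟨{a | a ∈ A ∧ a ≤ h}, fun a ha => ha.1, fun x =>
      (ContinuousMap.sSup_eval_subalgebra_le_eq hA h x).symm⟩⟩

/-- For a compact Hausdorff `X` and an ℓ-subalgebra `A` of `C(X)` separating
points, every continuous function is clopen relative to `A`. -/
theorem stmt_14 {X : Type*} [TopologicalSpace X] [CompactSpace X] [T2Space X]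
    (A : Subalgebra ℝ (ContinuousMap X ℝ))
    (hlat : ∀ f ∈ A, ∀ g ∈ A, f ⊔ g ∈ A ∧ f ⊓ g ∈ A)
    (hsep : ∀ x y : X, x ≠ y → ∃ a ∈ A, a x ≠ a y)
    (h : ContinuousMap X ℝ) :
    (∃ S : Set (ContinuousMap X ℝ), S ⊆ (A : Set (ContinuousMap X ℝ)) ∧
      ∀ x, h x = sInf ((fun a => a x) '' S)) ∧
    (∃ T : Set (ContinuousMap X ℝ), T ⊆ (A : Set (ContinuousMap X ℝ)) ∧
      ∀ x, h x = sSup ((fun a => a x) '' T)) :=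
  stmt_14_general A hsep h
end
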